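/- arXiv:2302.01828 — 2 statements merged into one kernel-verified Lean document; each statement's English description precedes it below -/
import Mathlib

section
/- Let T be an in-order-labeled binary search tree on {1,...,n}, and let v_i, v_j be vertices labeled i and j with v_j in the left subtree of v_i. With Δ(k) = M(k, s_k) the standard modules over the path algebra A_n of 1 → ... → n, both Hom_{A_n}(Δ(i),Δ(j)) and Hom_{A_n}(Δ(j),Δ(i)) vanish. -/
/-- Binary trees with vertices labeled by natural numbers. -/
inductive LTree where
  | leaf : LTree
  | node : LTree → ℕ → LTree → LTree

namespace LTree

/-- The in-order traversal list of labels. -/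
def toList : LTree → List ℕ
  | leaf => []
  | node l k r => toList l ++ k :: toList r

/-- The binary search tree property. -/
def IsBST : LTree → Prop
  | leaf => True
  | node l k r => (∀ x ∈ toList l, x < k) ∧ (∀ x ∈ toList r, k < x) ∧ IsBST l ∧ IsBST r

/-- `Subtree s t` means `s` is the subtree of `t` rooted at some vertex of `t`. -/
inductive Subtree : LTree → LTree → Prop
  | refl (t : LTree) : Subtree t t
  | left {s l r : LTree} {k : ℕ} : Subtree s l → Subtree s (node l k r)
  | right {s l r : LTree} {k : ℕ} : Subtree s r → Subtree s (node l k r)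

/-- The label of the root. -/
def rootLabel : LTree → Option ℕ
  | leaf => none
  | node _ k _ => some k

/-- The maximal label in a tree (0 for the empty tree). -/
def sMax (t : LTree) : ℕ := t.toList.foldr max 0

/-- The minimal label in a nonempty tree. -/
def sMin (t : LTree) : ℕ := t.toList.foldr min (sMax t)

end LTree
/-- The support of the interval representation `M(i,j)` of the linear quiver
`1 → 2 → ⋯ → n`: the vertex space at `k` is `K` if `i ≤ k ≤ j` and `0` otherwise. -/
def supp (i j k : ℕ) : Prop := i ≤ k ∧ k ≤ j

/-- The scalar describing the arrow map `k → k+1` of `M(i,j)`: it is the identity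
(scalar `1`) when both endpoints lie in the support, and `0` otherwise. -/
def arrS (K : Type) [Field K] (i j k : ℕ) : K := if i ≤ k ∧ k + 1 ≤ j then 1 else 0

/-- The space of morphisms of representations `M(i₁,j₁) → M(i₂,j₂)`: since every
vertex space is `K` or `0`, a morphism is a family of scalars `c k`, vanishing
wherever source or target vanishes, and commuting with the arrow maps. -/
def HomSet (K : Type) [Field K] (i₁ j₁ i₂ j₂ : ℕ) : Submodule K (ℕ → K) where
  carrier := {c | (∀ k, ¬(supp i₁ j₁ k ∧ supp i₂ j₂ k) → c k = 0) ∧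
    ∀ k, arrS K i₂ j₂ k * c k = c (k + 1) * arrS K i₁ j₁ k}
  zero_mem' := ⟨fun _ _ => rfl, fun _ => by simp⟩
  add_mem' := by
    rintro a b ⟨ha1, ha2⟩ ⟨hb1, hb2⟩
    refine ⟨fun k hk => ?_, fun k => ?_⟩
    · show a k + b k = 0
      rw [ha1 k hk, hb1 k hk, add_zero]
    · show arrS K i₂ j₂ k * (a k + b k) = (a (k + 1) + b (k + 1)) * arrS K i₁ j₁ k
      rw [mul_add, add_mul, ha2 k, hb2 k]
  smul_mem' := by
    rintro t a ⟨ha1, ha2⟩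
    refine ⟨fun k hk => ?_, fun k => ?_⟩
    · show t * a k = 0
      rw [ha1 k hk, mul_zero]
    · show arrS K i₂ j₂ k * (t * a k) = t * a (k + 1) * arrS K i₁ j₁ k
      rw [mul_left_comm, ha2 k, ← mul_assoc]

/-! Every label in the left subtree of the vertex `i` is smaller than `i`, so `s_j < i` and the
supports `[j, s_j]` of `Δ(j)` and `[i, s_i]` of `Δ(i)` are disjoint; a morphism between
representations with disjoint supports vanishes at every vertex. -/

namespace LTree

theorem Subtree.toList_infix {s t : LTree} (h : s.Subtree t) : s.toList <:+: t.toList := by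
  induction h with
  | refl => exact List.infix_refl _
  | left _ ih => exact ih.trans (List.prefix_append _ _).isInfix
  | right _ ih => exact ih.trans ((List.suffix_cons _ _).trans (List.suffix_append _ _)).isInfix

theorem sMax_lt {t : LTree} {i : ℕ} (hi : 0 < i) (h : ∀ x ∈ t.toList, x < i) : t.sMax < i :=
  Nat.lt_of_le_pred hi <| List.max_le_of_forall_le _ _ fun x hx => Nat.le_pred_of_lt (h x hx)

theorem Subtree.lt_of_mem_left {t l r : LTree} {i x : ℕ}
    (ht : t.toList.Pairwise (· < ·)) (h : (node l i r).Subtree t) (hx : x ∈ l.toList) :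
    x < i := by
  have hsorted := ht.sublist h.toList_infix.sublist
  simp only [toList, List.pairwise_append] at hsorted
  exact hsorted.2.2 x hx i List.mem_cons_self

end LTree

theorem HomSet_eq_bot_of_disjoint (K : Type) [Field K] {i₁ j₁ i₂ j₂ : ℕ}
    (h : j₂ < i₁ ∨ j₁ < i₂) : HomSet K i₁ j₁ i₂ j₂ = ⊥ := by
  rw [eq_bot_iff]
  rintro c ⟨hc, -⟩
  have : c = 0 := funext fun k => hc k fun ⟨⟨_, _⟩, ⟨_, _⟩⟩ => by omega
  simp [this]

theorem stmt8_general (K : Type) [Field K] (n : ℕ) (T l r sj : LTree) (i j : ℕ)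
    (hT : T.toList = List.range' 1 n)
    (hsub : LTree.Subtree (.node l i r) T)
    (hsj : sj.Subtree l) :
    HomSet K i (LTree.sMax (LTree.node l i r)) j (LTree.sMax sj) = ⊥ ∧
    HomSet K j (LTree.sMax sj) i (LTree.sMax (LTree.node l i r)) = ⊥ := by
  have hsorted : T.toList.Pairwise (· < ·) := hT ▸ List.pairwise_lt_range'
  have hi : 0 < i := by
    have : i ∈ List.range' 1 n := hT ▸ hsub.toList_infix.subset (by simp [LTree.toList])
    exact (List.mem_range'_1.mp this).1
  have hsj_lt : sj.sMax < i :=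
    LTree.sMax_lt hi fun x hx => hsub.lt_of_mem_left hsorted (hsj.toList_infix.subset hx)
  exact ⟨HomSet_eq_bot_of_disjoint K (.inl hsj_lt), HomSet_eq_bot_of_disjoint K (.inr hsj_lt)⟩

/-- Let `T` be an in-order labeled binary search tree on `{1,…,n}`, with standard
modules `Δ(k) = M(k, s_k)` over the path algebra of `1 → ⋯ → n`.  If the vertex
labeled `j` lies in the left subtree of the vertex labeled `i`, then both
`Hom(Δ(i), Δ(j))` and `Hom(Δ(j), Δ(i))` vanish. -/
theorem stmt8 (K : Type) [Field K] (n : ℕ) (T l r sj : LTree) (i j : ℕ)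
    (hT : T.toList = List.range' 1 n)
    (hsub : LTree.Subtree (.node l i r) T)
    (hsj : sj.Subtree l) (hj : sj.rootLabel = some j) :
    HomSet K i (LTree.sMax (LTree.node l i r)) j (LTree.sMax sj) = ⊥ ∧
    HomSet K j (LTree.sMax sj) i (LTree.sMax (LTree.node l i r)) = ⊥ :=
  stmt8_general K n T l r sj i j hT hsub hsj
end

section
/- Let A be an associative unital algebra over a field K, and let X, Y be K-subspaces of A closed under multiplication, with dim(X ∩ Y) = 1, with chosen complements X′ of X∩Y in X and Y′ of X∩Y in Y satisfying X′·Y′ = Y′·X′ = 0, and with 1_A contained in the span of X ∪ Y. Then C = X′ ⊕ Y′ ⊕ (X ∩ Y) is a unital subalgebra of A. -/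
/-!
Since `X′ ⊔ (X ∩ Y) = X` and `Y′ ⊔ (X ∩ Y) = Y`, the space `C` is just `X + Y`, which
contains `1`; so it suffices that `X + Y` is closed under multiplication. Expanding `X · Y`
over `X = X′ + (X ∩ Y)` and `Y = Y′ + (X ∩ Y)`, the term `X′ · Y′` vanishes,
`X′ · (X ∩ Y) ⊆ X · X ⊆ X` and `(X ∩ Y) · Y ⊆ Y · Y ⊆ Y`; symmetrically for `Y · X`.
-/

theorem sup_eq_sup_sup_of_sup_eq {α : Type*} [SemilatticeSup α] {x y x' y' z : α}
    (hx : x' ⊔ z = x) (hy : y' ⊔ z = y) : x ⊔ y = x' ⊔ y' ⊔ z := by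
  rw [← hx, ← hy, sup_sup_sup_comm, sup_idem]

namespace Submodule

variable {K A : Type*} [CommSemiring K] [Semiring A] [Algebra K A]

theorem mul_le_sup_of_sup_eq {X Y X' Y' Z : Submodule K A} (hX : X * X ≤ X) (hY : Y * Y ≤ Y)
    (hX' : X' ⊔ Z = X) (hY' : Y' ⊔ Z = Y) (hX'Y' : X' * Y' = ⊥) : X * Y ≤ X ⊔ Y := by
  have hX'X : X' ≤ X := hX' ▸ le_sup_left
  have hZX : Z ≤ X := hX' ▸ le_sup_right
  have hZY : Z ≤ Y := hY' ▸ le_sup_right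
  have hX'Z : X' * Z ≤ X := le_trans (mul_le_mul' hX'X hZX) hX
  have hZY' : Z * Y ≤ Y := le_trans (mul_le_mul' hZY le_rfl) hY
  calc X * Y = X' * Y' ⊔ X' * Z ⊔ Z * Y := by rw [← hX', sup_mul, ← hY', mul_sup, hY']
    _ ≤ X ⊔ Y := by rw [hX'Y', bot_sup_eq]; exact sup_le_sup hX'Z hZY'

theorem sup_mul_sup_le {X Y : Submodule K A} (hX : X * X ≤ X) (hY : Y * Y ≤ Y)
    (hXY : X * Y ≤ X ⊔ Y) (hYX : Y * X ≤ X ⊔ Y) : (X ⊔ Y) * (X ⊔ Y) ≤ X ⊔ Y := by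
  rw [sup_mul, mul_sup, mul_sup]
  exact sup_le (sup_le (le_sup_of_le_left hX) hXY) (sup_le hYX (le_sup_of_le_right hY))

theorem mul_eq_bot_of_forall {X Y : Submodule K A} (h : ∀ a ∈ X, ∀ b ∈ Y, a * b = 0) :
    X * Y = ⊥ :=
  eq_bot_iff.mpr <| mul_le.mpr fun a ha b hb => (h a ha b hb).symm ▸ zero_mem _

end Submodule

open Submodule in
theorem stmt15_general (K A : Type) [Field K] [Ring A] [Algebra K A]
    (X Y X' Y' : Submodule K A)
    (hXmul : ∀ a ∈ X, ∀ b ∈ X, a * b ∈ X)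
    (hYmul : ∀ a ∈ Y, ∀ b ∈ Y, a * b ∈ Y)
    (hX'c : X' ⊔ (X ⊓ Y) = X)
    (hY'c : Y' ⊔ (X ⊓ Y) = Y)
    (hzero : ∀ a ∈ X', ∀ b ∈ Y', a * b = 0 ∧ b * a = 0)
    (hone : (1 : A) ∈ X ⊔ Y) :
    ∃ S : Subalgebra K A,
      Subalgebra.toSubmodule S = X' ⊔ Y' ⊔ (X ⊓ Y) := by
  have hX : X * X ≤ X := mul_le.mpr hXmul
  have hY : Y * Y ≤ Y := mul_le.mpr hYmul
  have hXY : X * Y ≤ X ⊔ Y := mul_le_sup_of_sup_eq hX hY hX'c hY'c <|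
    mul_eq_bot_of_forall fun a ha b hb => (hzero a ha b hb).1
  have hYX : Y * X ≤ X ⊔ Y := sup_comm X Y ▸ mul_le_sup_of_sup_eq hY hX hY'c hX'c <|
    mul_eq_bot_of_forall fun b hb a ha => (hzero a ha b hb).2
  have hmul := sup_mul_sup_le hX hY hXY hYX
  refine ⟨(X ⊔ Y).toSubalgebra hone fun a b ha hb => hmul (mul_mem_mul ha hb), ?_⟩
  rw [toSubalgebra_toSubmodule, sup_eq_sup_sup_of_sup_eq hX'c hY'c]

/-- Gluing of subalgebras: let `A` be an associative unital `K`-algebra and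
`X, Y ⊆ A` subspaces closed under multiplication with `dim (X ∩ Y) = 1`, with
chosen complements `X′` of `X ∩ Y` in `X` and `Y′` of `X ∩ Y` in `Y` such that
`X′·Y′ = Y′·X′ = 0`, and with `1 ∈ span(X ∪ Y)`.  Then
`C = X′ ⊕ Y′ ⊕ (X ∩ Y)` is a unital subalgebra of `A`. -/
theorem stmt15 (K A : Type) [Field K] [Ring A] [Algebra K A]
    (X Y X' Y' : Submodule K A)
    (hXmul : ∀ a ∈ X, ∀ b ∈ X, a * b ∈ X)
    (hYmul : ∀ a ∈ Y, ∀ b ∈ Y, a * b ∈ Y)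
    (hdim : Module.finrank K ↥(X ⊓ Y) = 1)
    (hX'c : X' ⊔ (X ⊓ Y) = X) (hX'd : X' ⊓ (X ⊓ Y) = ⊥)
    (hY'c : Y' ⊔ (X ⊓ Y) = Y) (hY'd : Y' ⊓ (X ⊓ Y) = ⊥)
    (hzero : ∀ a ∈ X', ∀ b ∈ Y', a * b = 0 ∧ b * a = 0)
    (hone : (1 : A) ∈ X ⊔ Y) :
    ∃ S : Subalgebra K A,
      Subalgebra.toSubmodule S = X' ⊔ Y' ⊔ (X ⊓ Y) :=
  stmt15_general K A X Y X' Y' hXmul hYmul hX'c hY'c hzero hone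
end
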